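/- Let p ∈ A be a monic irreducible polynomial and A_{(p)} the localization of A at the prime ideal (p). Let exp_{C̃} act on K[[z]] by exp_{C̃}(Σ_m c_m z^m) = Σ_{i≥0} D_i^{−1} z^i Σ_m c_m^{q^i} z^m. Then exp_{C̃} maps p·A_{(p)}[[z]] bijectively onto p·A_{(p)}[[z]]. -/

import Mathlib

/-!
Coefficientwise, `exp_{C̃}` is unitriangular: the `z^m`-coefficient of `exp_{C̃} f` is `c_m` plus
the terms `D_i⁻¹ c_{m-i}^{q^i}` with `i ≥ 1`, so it is inverted by solving for `c_m` recursively.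
Both directions preserve `p·A_{(p)}[[z]]` because `D_i⁻¹ x^{q^i} ∈ p·A_{(p)}` for `x ∈ p·A_{(p)}`:
from `D_i = ∏_{k<i} (θ^{q^{i-k}} - θ)^{q^k}` with every `θ^{q^m} - θ` separable, the `p`-adic
valuation of `D_i` is at most `∑_{k<i} q^k < q^i`.
-/

noncomputable section

open Polynomial

variable (Fq : Type) [Field Fq] [Fintype Fq]

/-- The Carlitz factorials `D_i ∈ A`. -/
def DcarA (i : ℕ) : Polynomial Fq :=
  ∏ k ∈ Finset.range i,
    ((Polynomial.X : Polynomial Fq) ^ (Fintype.card Fq) ^ i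
      - Polynomial.X ^ (Fintype.card Fq) ^ k)

/-- `exp_{C̃}(∑_m c_m z^m) = ∑_{i≥0} D_i⁻¹ z^i ∑_m c_m^{q^i} z^m` on `K[[z]]`,
defined coefficientwise. -/
def expTildeC (f : PowerSeries (RatFunc Fq)) : PowerSeries (RatFunc Fq) :=
  PowerSeries.mk fun m =>
    ∑ i ∈ Finset.range (m + 1),
      (algebraMap (Polynomial Fq) (RatFunc Fq) (DcarA Fq i))⁻¹ *
        (PowerSeries.coeff (m - i) f) ^ (Fintype.card Fq) ^ i

/-- `x ∈ p·A_{(p)} ⊆ K`, i.e. `x = p·a/b` with `a, b ∈ A`, `p ∤ b`. -/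
def MemPLoc (p : Polynomial Fq) (x : RatFunc Fq) : Prop :=
  ∃ a b : Polynomial Fq, ¬ p ∣ b ∧
    algebraMap (Polynomial Fq) (RatFunc Fq) b * x =
      algebraMap (Polynomial Fq) (RatFunc Fq) (p * a)

/-- `p·A_{(p)}[[z]]`: power series all of whose coefficients lie in `p·A_{(p)}`. -/
def PLocSeries (p : Polynomial Fq) : Set (PowerSeries (RatFunc Fq)) :=
  {f | ∀ m, MemPLoc Fq p (PowerSeries.coeff m f)}

section MemPLoc

variable {F : Type} [Field F] {p : F[X]}

def pLocAddSubgroup (hp : Prime p) : AddSubgroup (RatFunc F) where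
  carrier := {x | MemPLoc F p x}
  zero_mem' := ⟨0, 1, hp.not_dvd_one, by simp⟩
  add_mem' := by
    rintro x y ⟨a, b, hb, hbx⟩ ⟨c, d, hd, hdy⟩
    refine ⟨a * d + c * b, b * d, hp.not_dvd_mul hb hd, ?_⟩
    simp only [map_mul, map_add] at hbx hdy ⊢
    linear_combination algebraMap F[X] (RatFunc F) d * hbx + algebraMap F[X] (RatFunc F) b * hdy
  neg_mem' := by
    rintro x ⟨a, b, hb, hbx⟩
    refine ⟨-a, b, hb, ?_⟩
    simp only [map_mul, map_neg] at hbx ⊢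
    linear_combination -hbx

theorem MemPLoc.inv_mul_pow (hp : Prime p) {D : F[X]} {n : ℕ} {x : RatFunc F}
    (hx : MemPLoc F p x) (hD : emultiplicity p D < n) :
    MemPLoc F p ((algebraMap F[X] (RatFunc F) D)⁻¹ * x ^ n) := by
  obtain ⟨a, b, hb, hbx⟩ := hx
  have hfin : FiniteMultiplicity p D := finiteMultiplicity_iff_emultiplicity_ne_top.mpr hD.ne_top
  obtain ⟨u, hDu, hu⟩ := hfin.exists_eq_pow_mul_and_not_dvd
  set v := multiplicity p D
  have hvn : v < n := multiplicity_lt_of_emultiplicity_lt hD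
  refine ⟨a ^ n * p ^ (n - 1 - v), b ^ n * u,
    hp.not_dvd_mul (fun h ↦ hb (hp.dvd_of_dvd_pow h)) hu, ?_⟩
  have hu0 : algebraMap F[X] (RatFunc F) u ≠ 0 :=
    RatFunc.algebraMap_ne_zero fun h ↦ hu (h ▸ dvd_zero p)
  have hp0 : algebraMap F[X] (RatFunc F) p ≠ 0 := RatFunc.algebraMap_ne_zero hp.ne_zero
  have hpow : p ^ n = p ^ v * (p * p ^ (n - 1 - v)) := by
    rw [← pow_succ', ← pow_add]; congr 1; omega
  have := congrArg (· ^ n) hbx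
  simp only [mul_pow, ← map_pow, hpow] at this
  rw [hDu]
  simp only [map_mul, map_pow] at this ⊢
  field_simp
  linear_combination this

end MemPLoc

section

variable {Fq}

theorem X_pow_card_pow_sub_X_pow_card_pow {i k : ℕ} (hk : k ≤ i) :
    (X : Fq[X]) ^ Fintype.card Fq ^ i - X ^ Fintype.card Fq ^ k
      = (X ^ Fintype.card Fq ^ (i - k) - X) ^ Fintype.card Fq ^ k := by
  obtain ⟨r, _, n, hr, hcard⟩ := FiniteField.card' Fq
  have : Fact r.Prime := ⟨hr⟩
  have hq : Fintype.card Fq ^ k = r ^ (n * k) := by rw [hcard, pow_mul]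
  rw [hq, sub_pow_char_pow, ← pow_mul, ← hq, ← pow_add, Nat.sub_add_cancel hk]

theorem DcarA_eq_prod (i : ℕ) :
    DcarA Fq i = ∏ k ∈ Finset.range i,
      ((X : Fq[X]) ^ Fintype.card Fq ^ (i - k) - X) ^ Fintype.card Fq ^ k :=
  Finset.prod_congr rfl fun _ hk ↦
    X_pow_card_pow_sub_X_pow_card_pow (Finset.mem_range.mp hk).le

theorem separable_X_pow_card_pow_sub_X {m : ℕ} (hm : m ≠ 0) :
    Separable ((X : Fq[X]) ^ Fintype.card Fq ^ m - X) := by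
  obtain ⟨r, _, n, hr, hcard⟩ := FiniteField.card' Fq
  exact galois_poly_separable r _ (hcard ▸ dvd_pow (dvd_pow_self r n.ne_zero) hm)

theorem emultiplicity_DcarA_lt {p : Fq[X]} (hp : Prime p) (i : ℕ) :
    emultiplicity p (DcarA Fq i) < (Fintype.card Fq ^ i : ℕ) := by
  have hsep (k) (hk : k ∈ Finset.range i) :
      emultiplicity p ((X : Fq[X]) ^ Fintype.card Fq ^ (i - k) - X) ≤ 1 :=
    emultiplicity_le_one_of_separable hp.not_isUnit
      (separable_X_pow_card_pow_sub_X (by simp at hk; omega))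
  calc emultiplicity p (DcarA Fq i)
      = ∑ k ∈ Finset.range i, (Fintype.card Fq ^ k : ℕ) *
          emultiplicity p ((X : Fq[X]) ^ Fintype.card Fq ^ (i - k) - X) := by
        simp only [DcarA_eq_prod, Finset.emultiplicity_prod hp, emultiplicity_pow hp]
    _ ≤ ∑ k ∈ Finset.range i, ((Fintype.card Fq ^ k : ℕ) : ℕ∞) :=
        Finset.sum_le_sum fun k hk ↦ mul_le_of_le_one_right zero_le (hsep k hk)
    _ < (Fintype.card Fq ^ i : ℕ) := by
        exact_mod_cast Nat.geomSum_lt Fintype.one_lt_card (by simp)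

def expTildeCTerm (i : ℕ) (x : RatFunc Fq) : RatFunc Fq :=
  (algebraMap Fq[X] (RatFunc Fq) (DcarA Fq i))⁻¹ * x ^ Fintype.card Fq ^ i

theorem coeff_expTildeC (f : PowerSeries (RatFunc Fq)) (m : ℕ) :
    PowerSeries.coeff m (expTildeC Fq f) =
      ∑ i ∈ Finset.range (m + 1), expTildeCTerm i (PowerSeries.coeff (m - i) f) :=
  PowerSeries.coeff_mk _ _

theorem coeff_expTildeC_eq_add (f : PowerSeries (RatFunc Fq)) (m : ℕ) :
    PowerSeries.coeff m (expTildeC Fq f) =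
      PowerSeries.coeff m f + ∑ j : Fin m, expTildeCTerm (m - j) (PowerSeries.coeff j f) := by
  rw [coeff_expTildeC, ← Finset.sum_range_reflect, Finset.sum_range_succ,
    Fin.sum_univ_eq_sum_range (fun j ↦ expTildeCTerm (m - j) (PowerSeries.coeff j f)), add_comm,
    Nat.add_sub_cancel]
  congr 1
  · simp [expTildeCTerm, DcarA]
  · refine Finset.sum_congr rfl fun j hj ↦ ?_
    rw [Nat.sub_sub_self (Finset.mem_range.mp hj).le]

def expTildeCInvCoeff (g : PowerSeries (RatFunc Fq)) : ℕ → RatFunc Fq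
  | m => PowerSeries.coeff m g - ∑ j : Fin m, expTildeCTerm (m - j) (expTildeCInvCoeff g j)

def expTildeCInv (g : PowerSeries (RatFunc Fq)) : PowerSeries (RatFunc Fq) :=
  PowerSeries.mk (expTildeCInvCoeff g)

theorem coeff_expTildeCInv (g : PowerSeries (RatFunc Fq)) (m : ℕ) :
    PowerSeries.coeff m (expTildeCInv g) = PowerSeries.coeff m g -
      ∑ j : Fin m, expTildeCTerm (m - j) (PowerSeries.coeff j (expTildeCInv g)) := by
  simp only [expTildeCInv, PowerSeries.coeff_mk]
  rw [expTildeCInvCoeff]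

theorem rightInverse_expTildeCInv :
    Function.RightInverse (expTildeCInv (Fq := Fq)) (expTildeC Fq) :=
  fun g ↦ PowerSeries.ext fun m ↦ by
    rw [coeff_expTildeC_eq_add, coeff_expTildeCInv, sub_add_cancel]

theorem leftInverse_expTildeCInv :
    Function.LeftInverse (expTildeCInv (Fq := Fq)) (expTildeC Fq) :=
  fun f ↦ PowerSeries.ext fun m ↦ by
    induction m using Nat.strong_induction_on with
    | _ m ih =>
      simp only [coeff_expTildeCInv, fun j : Fin m ↦ ih j j.isLt, coeff_expTildeC_eq_add,
        add_sub_cancel_right]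

theorem memPLoc_expTildeCTerm {p : Fq[X]} (hp : Prime p) (i : ℕ) {x : RatFunc Fq}
    (hx : MemPLoc Fq p x) : MemPLoc Fq p (expTildeCTerm i x) :=
  hx.inv_mul_pow hp (emultiplicity_DcarA_lt hp i)

theorem mapsTo_expTildeC {p : Fq[X]} (hp : Prime p) :
    Set.MapsTo (expTildeC Fq) (PLocSeries Fq p) (PLocSeries Fq p) := fun f hf m ↦ by
  rw [coeff_expTildeC]
  exact (pLocAddSubgroup hp).sum_mem fun i _ ↦ memPLoc_expTildeCTerm hp i (hf (m - i))

theorem mapsTo_expTildeCInv {p : Fq[X]} (hp : Prime p) :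
    Set.MapsTo expTildeCInv (PLocSeries Fq p) (PLocSeries Fq p) := fun g hg m ↦ by
  induction m using Nat.strong_induction_on with
  | _ m ih =>
    rw [coeff_expTildeCInv]
    exact (pLocAddSubgroup hp).sub_mem (hg m) <| (pLocAddSubgroup hp).sum_mem fun j _ ↦
      memPLoc_expTildeCTerm hp _ (ih j j.isLt)

end

theorem expTildeC_bijOn_pLoc (p : Polynomial Fq) (hp : Irreducible p) :
    Set.BijOn (expTildeC Fq) (PLocSeries Fq p) (PLocSeries Fq p) :=
  Set.InvOn.bijOn ⟨leftInverse_expTildeCInv.leftInvOn _, rightInverse_expTildeCInv.rightInvOn _⟩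
    (mapsTo_expTildeC hp.prime) (mapsTo_expTildeCInv hp.prime)

end
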